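/- Let 𝓐=(A,δ^A,σ^A,τ^A) and 𝓑=(B,δ^B,σ^B,τ^B) be fuzzy automata over a complete residuated lattice 𝓛 and alphabet X, and let φ be a uniform fuzzy relation between A and B. Then φ is a forward bisimulation between 𝓐 and 𝓑 if and only if the following equalities hold: σ^A∘φ∘φ⁻¹ = σ^B∘φ⁻¹ and σ^A∘φ = σ^B∘φ⁻¹∘φ; δ^A_x∘φ∘φ⁻¹ = φ∘δ^B_x∘φ⁻¹ and φ⁻¹∘δ^A_x∘φ = δ^B_x∘φ⁻¹∘φ for every x∈X; τ^A = φ∘τ^B and φ⁻¹∘τ^A = τ^B. -/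
import Mathlib


universe u

/-- A complete residuated lattice: a complete lattice with a commutative monoid
structure whose unit is the top element, together with a residuum operation
forming an adjoint pair with the multiplication. -/
class CompleteResiduatedLattice (L : Type*) extends CompleteLattice L, CommMonoid L where
  /-- the residuum operation `→` -/
  res : L → L → L
  /-- the adjunction property -/
  adjunction : ∀ x y z : L, x * y ≤ z ↔ x ≤ res y z
  /-- the multiplicative unit `1` is the greatest element -/
  one_eq_top : (1 : L) = ⊤

namespace FuzzyAutomataBisim

/-- A fuzzy automaton over `L` and alphabet `X`, with state set `A`. -/
structure FuzzyAutomaton (L : Type*) [CompleteResiduatedLattice L] (X A : Type*) where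
  δ : A → X → A → L
  σ : A → L
  τ : A → L

variable {L X A B C : Type*} [CompleteResiduatedLattice L]

/-- biresiduum `x ↔ y = (x → y) ⊓ (y → x)` -/
def bires (x y : L) : L :=
  CompleteResiduatedLattice.res x y ⊓ CompleteResiduatedLattice.res y x

/-- inverse of a fuzzy relation -/
def inv (φ : A → B → L) : B → A → L := fun b a => φ a b

/-- composition of fuzzy relations -/
def rcomp (φ : A → B → L) (ψ : B → C → L) : A → C → L := fun a c => ⨆ b, φ a b * ψ b c

/-- composition of a fuzzy set with a fuzzy relation -/
def scomp (f : A → L) (φ : A → B → L) : B → L := fun b => ⨆ a, f a * φ a b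

/-- composition of a fuzzy relation with a fuzzy set -/
def rscomp (φ : A → B → L) (g : B → L) : A → L := fun a => ⨆ b, φ a b * g b

/-- degree of overlapping of two fuzzy sets -/
def sdot (f g : A → L) : L := ⨆ a, f a * g a

/-- kernel `E_A^φ` of a fuzzy relation -/
def ker (φ : A → B → L) : A → A → L := fun a₁ a₂ => ⨅ b, bires (φ a₁ b) (φ a₂ b)

/-- co-kernel `E_B^φ` of a fuzzy relation -/
def coker (φ : A → B → L) : B → B → L := fun b₁ b₂ => ⨅ a, bires (φ a b₁) (φ a b₂)

/-- `φ` is an `L`-function -/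
def IsLFun (φ : A → B → L) : Prop := ∀ a, ∃ b, φ a b = 1

/-- `φ` is surjective, i.e. `φ⁻¹` is an `L`-function -/
def IsSurj (φ : A → B → L) : Prop := ∀ b, ∃ a, φ a b = 1

/-- `φ` is a partial fuzzy function: `φ ∘ φ⁻¹ ∘ φ ≤ φ` -/
def IsPFF (φ : A → B → L) : Prop := rcomp (rcomp φ (inv φ)) φ ≤ φ

/-- `φ` is a uniform fuzzy relation: a partial fuzzy function that is a
surjective `L`-function -/
def IsUniform (φ : A → B → L) : Prop := IsPFF φ ∧ IsLFun φ ∧ IsSurj φ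

/-- the set of crisp descriptions of `φ` -/
def CR (φ : A → B → L) : Set (A → B) := {ψ | ∀ a, φ a (ψ a) = 1}

/-- `ψ : A → B` is `F`-surjective -/
def SurjMod (F : B → B → L) (ψ : A → B) : Prop := ∀ b, ∃ a, F (ψ a) b = 1

/-- fuzzy equivalence relation -/
structure IsFuzzyEquiv (E : A → A → L) : Prop where
  refl : ∀ a, E a a = 1
  symm : ∀ a b, E a b = E b a
  trans : ∀ a b c, E a b * E b c ≤ E a c

/-- fuzzy equality -/
def IsFuzzyEquality (E : A → A → L) : Prop :=
  IsFuzzyEquiv E ∧ ∀ a b, E a b = 1 → a = b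

/-- the factor set `A/E = {E_a : a ∈ A}` -/
abbrev FactorSet (E : A → A → L) := {f : A → L // ∃ a, E a = f}

/-- the class `E_a` as an element of `A/E` -/
def toClass (E : A → A → L) (a : A) : FactorSet E := ⟨E a, a, rfl⟩

/-- a chosen representative of a class -/
noncomputable def rep {E : A → A → L} (c : FactorSet E) : A := c.2.choose

/-- the fuzzy relation `Ẽ` on `A/E` -/
noncomputable def tildeRel (E : A → A → L) : FactorSet E → FactorSet E → L :=
  fun c c' => E (rep c) (rep c')

open Classical in
/-- a chosen crisp description of `φ` -/
noncomputable def crispDesc [Nonempty B] (φ : A → B → L) : A → B :=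
  fun a => if h : ∃ b, φ a b = 1 then h.choose else Classical.arbitrary B

/-- the induced map `φ̃ : A/E_A^φ → B/E_B^φ`, `φ̃(E_a) = F_{ψ(a)}` -/
noncomputable def tilde [Nonempty B] (φ : A → B → L) :
    FactorSet (ker φ) → FactorSet (coker φ) :=
  fun c => toClass (coker φ) (crispDesc φ (rep c))

/-- the fuzzy transition relation `δ_x` -/
def FuzzyAutomaton.δx (M : FuzzyAutomaton L X A) (x : X) : A → A → L := fun a b => M.δ a x b

open Classical in
/-- transitions extended to words -/
noncomputable def deltaWord (M : FuzzyAutomaton L X A) : List X → A → A → L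
  | [] => fun a b => if a = b then (1 : L) else ⊥
  | x :: u => rcomp (M.δx x) (deltaWord M u)

/-- the fuzzy language recognized by `M` : `L(M)(u) = σ ∘ δ_u ∘ τ` -/
noncomputable def lang (M : FuzzyAutomaton L X A) (u : List X) : L :=
  sdot (scomp M.σ (deltaWord M u)) M.τ

/-- forward simulation -/
def IsForwardSim (MA : FuzzyAutomaton L X A) (MB : FuzzyAutomaton L X B)
    (φ : A → B → L) : Prop :=
  MA.σ ≤ scomp MB.σ (inv φ) ∧
  (∀ x, rcomp (inv φ) (MA.δx x) ≤ rcomp (MB.δx x) (inv φ)) ∧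
  rscomp (inv φ) MA.τ ≤ MB.τ

/-- backward simulation -/
def IsBackwardSim (MA : FuzzyAutomaton L X A) (MB : FuzzyAutomaton L X B)
    (φ : A → B → L) : Prop :=
  scomp MA.σ φ ≤ MB.σ ∧
  (∀ x, rcomp (MA.δx x) φ ≤ rcomp φ (MB.δx x)) ∧
  MA.τ ≤ rscomp φ MB.τ

/-- forward bisimulation -/
def IsForwardBisim (MA : FuzzyAutomaton L X A) (MB : FuzzyAutomaton L X B)
    (φ : A → B → L) : Prop :=
  IsForwardSim MA MB φ ∧ IsForwardSim MB MA (inv φ)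

/-- backward bisimulation -/
def IsBackwardBisim (MA : FuzzyAutomaton L X A) (MB : FuzzyAutomaton L X B)
    (φ : A → B → L) : Prop :=
  IsBackwardSim MA MB φ ∧ IsBackwardSim MB MA (inv φ)

/-- backward-forward bisimulation -/
def IsBFBisim (MA : FuzzyAutomaton L X A) (MB : FuzzyAutomaton L X B)
    (φ : A → B → L) : Prop :=
  IsBackwardSim MA MB φ ∧ IsForwardSim MB MA (inv φ)

/-- forward-backward bisimulation -/
def IsFBBisim (MA : FuzzyAutomaton L X A) (MB : FuzzyAutomaton L X B)
    (φ : A → B → L) : Prop :=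
  IsForwardSim MA MB φ ∧ IsBackwardSim MB MA (inv φ)

/-- isomorphism of fuzzy automata -/
def IsIso (MA : FuzzyAutomaton L X A) (MB : FuzzyAutomaton L X B) (h : A → B) : Prop :=
  Function.Bijective h ∧
  (∀ (a₁ : A) (x : X) (a₂ : A), MA.δ a₁ x a₂ = MB.δ (h a₁) x (h a₂)) ∧
  (∀ a, MA.σ a = MB.σ (h a)) ∧
  (∀ a, MA.τ a = MB.τ (h a))

/-- the factor fuzzy automaton `𝓐/E` -/
noncomputable def factorAut (M : FuzzyAutomaton L X A) (E : A → A → L) :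
    FuzzyAutomaton L X (FactorSet E) where
  δ := fun c x c' => rcomp (rcomp E (M.δx x)) E (rep c) (rep c')
  σ := fun c => scomp M.σ E (rep c)
  τ := fun c => rscomp E M.τ (rep c)

/-- the natural fuzzy relation `φ(a₁, E_{a₂}) = E(a₁,a₂)` between `A` and `A/E` -/
def natRel (E : A → A → L) : A → FactorSet E → L := fun a c => c.1 a

/-- the fuzzy relation `G/E` on `A/E` -/
noncomputable def quotRel (E G : A → A → L) : FactorSet E → FactorSet E → L :=
  fun c c' => G (rep c) (rep c')

/-- the fuzzy relation `φ(a₁, E_{a₂}) = G(a₁,a₂)` between `A` and `A/E` -/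
noncomputable def quotNatRel (E G : A → A → L) : A → FactorSet E → L :=
  fun a c => G a (rep c)

/-- UFB-equivalence of fuzzy automata -/
def UFBEquiv (MA : FuzzyAutomaton L X A) (MB : FuzzyAutomaton L X B) : Prop :=
  ∃ φ : A → B → L, IsUniform φ ∧ IsForwardBisim MA MB φ

section AuxLemmas

open CompleteResiduatedLattice

variable {D : Type*}

lemma crl_le_one (a : L) : a ≤ 1 := by
  rw [CompleteResiduatedLattice.one_eq_top]; exact le_top

lemma crl_mul_le_right {a b : L} (c : L) (h : a ≤ b) : a * c ≤ b * c := by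
  refine (adjunction a c (b * c)).2 (h.trans ?_)
  exact (adjunction b c (b * c)).1 le_rfl

lemma crl_mul_le_mul {a b c d : L} (h1 : a ≤ b) (h2 : c ≤ d) : a * c ≤ b * d :=
  calc a * c ≤ b * c := crl_mul_le_right c h1
    _ = c * b := mul_comm _ _
    _ ≤ d * b := crl_mul_le_right b h2
    _ = b * d := mul_comm _ _

lemma crl_iSup_mul {ι : Sort*} (f : ι → L) (a : L) :
    (⨆ i, f i) * a = ⨆ i, f i * a := by
  refine le_antisymm ?_ (iSup_le fun i => crl_mul_le_right a (le_iSup f i))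
  refine (adjunction _ a _).2 (iSup_le fun i => (adjunction _ a _).1 ?_)
  exact le_iSup (fun i => f i * a) i

lemma crl_mul_iSup {ι : Sort*} (a : L) (f : ι → L) :
    (a * ⨆ i, f i) = ⨆ i, a * f i := by
  rw [mul_comm, crl_iSup_mul]; simp [mul_comm]


lemma rcomp_assoc (φ : A → B → L) (ψ : B → C → L) (χ : C → D → L) :
    rcomp (rcomp φ ψ) χ = rcomp φ (rcomp ψ χ) := by
  funext a d
  simp only [rcomp, crl_iSup_mul, crl_mul_iSup, mul_assoc]
  exact iSup_comm

lemma scomp_rcomp (f : A → L) (φ : A → B → L) (ψ : B → C → L) :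
    scomp (scomp f φ) ψ = scomp f (rcomp φ ψ) := by
  funext c
  simp only [scomp, rcomp, crl_iSup_mul, crl_mul_iSup, mul_assoc]
  exact iSup_comm

lemma rscomp_rscomp (φ : A → B → L) (ψ : B → C → L) (g : C → L) :
    rscomp φ (rscomp ψ g) = rscomp (rcomp φ ψ) g := by
  funext a
  simp only [rscomp, rcomp, crl_iSup_mul, crl_mul_iSup, mul_assoc]
  exact iSup_comm.symm

lemma rcomp_mono {φ φ' : A → B → L} {ψ ψ' : B → C → L}
    (h1 : φ ≤ φ') (h2 : ψ ≤ ψ') : rcomp φ ψ ≤ rcomp φ' ψ' := by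
  intro a c
  exact iSup_mono fun b => crl_mul_le_mul (h1 a b) (h2 b c)

lemma scomp_mono {f f' : A → L} {φ φ' : A → B → L}
    (h1 : f ≤ f') (h2 : φ ≤ φ') : scomp f φ ≤ scomp f' φ' := by
  intro b
  exact iSup_mono fun a => crl_mul_le_mul (h1 a) (h2 a b)

lemma rscomp_mono {φ φ' : A → B → L} {g g' : B → L}
    (h1 : φ ≤ φ') (h2 : g ≤ g') : rscomp φ g ≤ rscomp φ' g' := by
  intro a
  exact iSup_mono fun b => crl_mul_le_mul (h1 a b) (h2 b)

lemma inv_rcomp (φ : A → B → L) (ψ : B → C → L) :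
    inv (rcomp φ ψ) = rcomp (inv ψ) (inv φ) := by
  funext c a
  simp only [inv, rcomp, mul_comm]

/-- diagonal of `φ ∘ φ⁻¹` is `1` when `φ` is an `L`-function -/
lemma diag_one_of_LFun {φ : A → B → L} (h : IsLFun φ) (a : A) :
    rcomp φ (inv φ) a a = 1 := by
  obtain ⟨b, hb⟩ := h a
  refine le_antisymm (crl_le_one _) ?_
  calc (1 : L) = φ a b * φ a b := by rw [hb, one_mul]
    _ ≤ _ := le_iSup (fun b => φ a b * inv φ b a) b

/-- diagonal of `φ⁻¹ ∘ φ` is `1` when `φ` is surjective -/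
lemma diag_one_of_Surj {φ : A → B → L} (h : IsSurj φ) (b : B) :
    rcomp (inv φ) φ b b = 1 := by
  obtain ⟨a, ha⟩ := h b
  refine le_antisymm (crl_le_one _) ?_
  calc (1 : L) = φ a b * φ a b := by rw [ha, one_mul]
    _ ≤ _ := le_iSup (fun a => inv φ b a * φ a b) a

lemma le_scomp_diag {E : A → A → L} (hE : ∀ a, E a a = 1) (f : A → L) :
    f ≤ scomp f E := by
  intro a
  calc f a = f a * E a a := by rw [hE a, mul_one]
    _ ≤ _ := le_iSup (fun a' => f a' * E a' a) a

lemma le_rcomp_diag_right {E : B → B → L} (hE : ∀ b, E b b = 1) (ρ : A → B → L) :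
    ρ ≤ rcomp ρ E := by
  intro a b
  calc ρ a b = ρ a b * E b b := by rw [hE b, mul_one]
    _ ≤ _ := le_iSup (fun b' => ρ a b' * E b' b) b

lemma le_rcomp_diag_left {E : A → A → L} (hE : ∀ a, E a a = 1) (ρ : A → B → L) :
    ρ ≤ rcomp E ρ := by
  intro a b
  calc ρ a b = E a a * ρ a b := by rw [hE a, one_mul]
    _ ≤ _ := le_iSup (fun a' => E a a' * ρ a' b) a

lemma le_rscomp_diag {E : A → A → L} (hE : ∀ a, E a a = 1) (g : A → L) :
    g ≤ rscomp E g := by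
  intro a
  calc g a = E a a * g a := by rw [hE a, one_mul]
    _ ≤ _ := le_iSup (fun a' => E a a' * g a') a

/-- `φ ∘ φ⁻¹ ∘ φ = φ` for a uniform `φ` -/
lemma uniform_triple {φ : A → B → L} (hu : IsUniform φ) :
    rcomp (rcomp φ (inv φ)) φ = φ := by
  refine le_antisymm hu.1 ?_
  exact le_rcomp_diag_left (diag_one_of_LFun hu.2.1) φ

/-- `φ⁻¹ ∘ φ ∘ φ⁻¹ = φ⁻¹` for a uniform `φ` -/
lemma uniform_triple_inv {φ : A → B → L} (hu : IsUniform φ) :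
    rcomp (rcomp (inv φ) φ) (inv φ) = inv φ := by
  have h := congrArg inv (uniform_triple hu)
  rwa [inv_rcomp, inv_rcomp, ← rcomp_assoc] at h

end AuxLemmas

/-- uniform forward bisimulations via equalities -/
theorem uniform_forwardBisim_iff_eq {L X A B : Type*} [CompleteResiduatedLattice L]
    [Nonempty A] [Nonempty B]
    (MA : FuzzyAutomaton L X A) (MB : FuzzyAutomaton L X B)
    (φ : A → B → L) (hu : IsUniform φ) :
    IsForwardBisim MA MB φ ↔
      (scomp (scomp MA.σ φ) (inv φ) = scomp MB.σ (inv φ) ∧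
       scomp MA.σ φ = scomp (scomp MB.σ (inv φ)) φ ∧
       (∀ x : X,
          rcomp (rcomp (MA.δx x) φ) (inv φ) = rcomp (rcomp φ (MB.δx x)) (inv φ) ∧
          rcomp (rcomp (inv φ) (MA.δx x)) φ = rcomp (MB.δx x) (rcomp (inv φ) φ)) ∧
       MA.τ = rscomp φ MB.τ ∧
       rscomp (inv φ) MA.τ = MB.τ) := by
  obtain ⟨hpff, hlf, hsur⟩ := hu
  have hu' : IsUniform φ := ⟨hpff, hlf, hsur⟩
  have hE : ∀ a, rcomp φ (inv φ) a a = 1 := diag_one_of_LFun hlf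
  have hF : ∀ b, rcomp (inv φ) φ b b = 1 := diag_one_of_Surj hsur
  have h3 : rcomp (rcomp φ (inv φ)) φ = φ := uniform_triple hu'
  have h3' : rcomp (rcomp (inv φ) φ) (inv φ) = inv φ := uniform_triple_inv hu'
  constructor
  · rintro ⟨⟨h1, h2, h3τ⟩, ⟨h1', h2', h3τ'⟩⟩
    refine ⟨?_, ?_, fun x => ⟨?_, ?_⟩, ?_, ?_⟩
    · refine le_antisymm ?_ (scomp_mono h1' le_rfl)
      calc scomp (scomp MA.σ φ) (inv φ)
          ≤ scomp (scomp (scomp MB.σ (inv φ)) φ) (inv φ) :=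
            scomp_mono (scomp_mono h1 le_rfl) le_rfl
        _ = scomp MB.σ (inv φ) := by
            simp only [scomp_rcomp, ← rcomp_assoc, h3']
    · refine le_antisymm (scomp_mono h1 le_rfl) ?_
      calc scomp (scomp MB.σ (inv φ)) φ
          ≤ scomp (scomp (scomp MA.σ φ) (inv φ)) φ :=
            scomp_mono (scomp_mono h1' le_rfl) le_rfl
        _ = scomp MA.σ φ := by
            simp only [scomp_rcomp, ← rcomp_assoc, h3]
    · refine le_antisymm ?_ (rcomp_mono (h2' x) le_rfl)
      calc rcomp (rcomp (MA.δx x) φ) (inv φ)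
          ≤ rcomp (rcomp φ (inv φ)) (rcomp (rcomp (MA.δx x) φ) (inv φ)) :=
            le_rcomp_diag_left hE _
        _ = rcomp φ (rcomp (rcomp (inv φ) (MA.δx x)) (rcomp φ (inv φ))) := by
            simp only [rcomp_assoc]
        _ ≤ rcomp φ (rcomp (rcomp (MB.δx x) (inv φ)) (rcomp φ (inv φ))) :=
            rcomp_mono le_rfl (rcomp_mono (h2 x) le_rfl)
        _ = rcomp (rcomp φ (MB.δx x)) (inv φ) := by
            rw [rcomp_assoc (MB.δx x), ← rcomp_assoc (inv φ) φ (inv φ), h3',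
              ← rcomp_assoc]
    · refine le_antisymm ?_ ?_
      · calc rcomp (rcomp (inv φ) (MA.δx x)) φ
            ≤ rcomp (rcomp (MB.δx x) (inv φ)) φ := rcomp_mono (h2 x) le_rfl
          _ = rcomp (MB.δx x) (rcomp (inv φ) φ) := rcomp_assoc _ _ _
      · calc rcomp (MB.δx x) (rcomp (inv φ) φ)
            ≤ rcomp (rcomp (inv φ) φ) (rcomp (MB.δx x) (rcomp (inv φ) φ)) :=
              le_rcomp_diag_left hF _
          _ = rcomp (inv φ) (rcomp (rcomp φ (MB.δx x)) (rcomp (inv φ) φ)) := by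
              simp only [rcomp_assoc]
          _ ≤ rcomp (inv φ) (rcomp (rcomp (MA.δx x) φ) (rcomp (inv φ) φ)) :=
              rcomp_mono le_rfl (rcomp_mono (h2' x) le_rfl)
          _ = rcomp (rcomp (inv φ) (MA.δx x)) φ := by
              rw [rcomp_assoc (MA.δx x), ← rcomp_assoc φ (inv φ) φ, h3,
                ← rcomp_assoc]
    · refine le_antisymm ?_ h3τ'
      calc MA.τ ≤ rscomp (rcomp φ (inv φ)) MA.τ := le_rscomp_diag hE _
        _ = rscomp φ (rscomp (inv φ) MA.τ) := (rscomp_rscomp _ _ _).symm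
        _ ≤ rscomp φ MB.τ := rscomp_mono le_rfl h3τ
    · refine le_antisymm h3τ ?_
      calc MB.τ ≤ rscomp (rcomp (inv φ) φ) MB.τ := le_rscomp_diag hF _
        _ = rscomp (inv φ) (rscomp φ MB.τ) := (rscomp_rscomp _ _ _).symm
        _ ≤ rscomp (inv φ) MA.τ := rscomp_mono le_rfl h3τ'
  · rintro ⟨e1, e2, e3, e4, e5⟩
    refine ⟨⟨?_, fun x => ?_, le_of_eq e5⟩, ⟨?_, fun x => ?_, le_of_eq e4.symm⟩⟩
    · calc MA.σ ≤ scomp MA.σ (rcomp φ (inv φ)) := le_scomp_diag hE _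
        _ = scomp (scomp MA.σ φ) (inv φ) := (scomp_rcomp _ _ _).symm
        _ = scomp MB.σ (inv φ) := e1
    · calc rcomp (inv φ) (MA.δx x)
          ≤ rcomp (rcomp (inv φ) (MA.δx x)) (rcomp φ (inv φ)) :=
            le_rcomp_diag_right hE _
        _ = rcomp (rcomp (rcomp (inv φ) (MA.δx x)) φ) (inv φ) :=
            (rcomp_assoc _ _ _).symm
        _ = rcomp (rcomp (MB.δx x) (rcomp (inv φ) φ)) (inv φ) := by rw [(e3 x).2]
        _ = rcomp (MB.δx x) (inv φ) := by rw [rcomp_assoc, h3']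
    · calc MB.σ ≤ scomp MB.σ (rcomp (inv φ) φ) := le_scomp_diag hF _
        _ = scomp (scomp MB.σ (inv φ)) φ := (scomp_rcomp _ _ _).symm
        _ = scomp MA.σ φ := e2.symm
    · calc rcomp φ (MB.δx x)
          ≤ rcomp (rcomp φ (MB.δx x)) (rcomp (inv φ) φ) :=
            le_rcomp_diag_right hF _
        _ = rcomp (rcomp (rcomp φ (MB.δx x)) (inv φ)) φ :=
            (rcomp_assoc _ _ _).symm
        _ = rcomp (rcomp (rcomp (MA.δx x) φ) (inv φ)) φ := by rw [(e3 x).1]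
        _ = rcomp (MA.δx x) φ := by
            rw [rcomp_assoc (MA.δx x), rcomp_assoc (MA.δx x), h3]


end FuzzyAutomataBisim
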